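/- arXiv:1910.09907 — 3 statements merged into one kernel-verified Lean document; each statement's English description precedes it below -/
import Mathlib

section
/- Let P = Σ_{|α|≤d} a_α(z) D_z^α be a linear partial differential operator with smooth real coefficients on ℝ^N, and let P̃ = Σ_{|γ|≤d̃} b_γ(z,ξ) D_{(z,ξ)}^γ be a linear partial differential operator with smooth real coefficients on ℝ^N × ℝ^p that lifts P, i.e. P̃(f∘π)(z,ξ) = (Pf)(z) for every f ∈ C^∞(ℝ^N) and every (z,ξ) ∈ ℝ^N × ℝ^p, where π(z,ξ) = z. Regard P as an operator on functions of (z,ξ) acting only in the z-variables (with coefficients a_α(z) independent of ξ), and set R := P̃ − P. Assume: (S.1) the formal adjoint R* of R can be written as R* = Σ_{(α,β), β≠0} r*_{α,β}(z,ξ) D_z^α D_ξ^β for finitely many smooth functions r*_{α,β} (i.e., every term of R* contains at least one ξ-derivative); (S.2) there exists a sequence θ_j ∈ C_c^∞(ℝ^p,[0,1]) such that the sets {ξ : θ_j(ξ) = 1} are nondecreasing in j with union ℝ^p, and for every compact K ⊆ ℝ^N and every coefficient r*_{α,β} there is a constant C_{α,β}(K) with |r*_{α,β}(z,ξ) D_ξ^β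 θ_j(ξ)| ≤ C_{α,β}(K) for all z ∈ K, ξ ∈ ℝ^p and all j. Suppose moreover that P̃ admits a global fundamental solution Γ̃((z,ξ);(ζ,η)) satisfying: (i) for every z, ζ ∈ ℝ^N with z ≠ ζ, the function η ↦ Γ̃((z,0);(ζ,η)) belongs to L¹(ℝ^p); (ii) for every z ∈ ℝ^N and every compact K ⊆ ℝ^N, the function (ζ,η) ↦ Γ̃((z,0);(ζ,η)) belongs to L¹(K × ℝ^p). Then the function Γ(z;ζ) := ∫_{ℝ^p} Γ̃((z,0);(ζ,η)) dη, defined for z ≠ ζ in ℝ^N, is a global fundamental solution for P on ℝ^N. -/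
open MeasureTheory Filter

noncomputable section

/-- The directional derivative of `f` along `v`. -/
def dirDeriv {E : Type*} [NormedAddCommGroup E] [NormedSpace ℝ E]
    (v : E) (f : E → ℝ) : E → ℝ :=
  fun x => fderiv ℝ f x v

/-- Iterated directional derivative of `f` along `v`. -/
def dirDerivIter {E : Type*} [NormedAddCommGroup E] [NormedSpace ℝ E]
    (v : E) : ℕ → (E → ℝ) → (E → ℝ)
  | 0, f => f
  | k + 1, f => dirDeriv v (dirDerivIter v k f)

/-- Derivative along a list of (direction, multiplicity) pairs. -/
def derivAlong {E : Type*} [NormedAddCommGroup E] [NormedSpace ℝ E] :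
    List (E × ℕ) → (E → ℝ) → (E → ℝ)
  | [], f => f
  | vk :: rest, f => dirDerivIter vk.1 vk.2 (derivAlong rest f)

/-- The multi-index partial derivative `D^α` on `ℝ^M`. -/
def Dmulti {M : ℕ} (α : Fin M → ℕ) (f : (Fin M → ℝ) → ℝ) : (Fin M → ℝ) → ℝ :=
  derivAlong ((List.finRange M).map fun i => (Pi.single i (1 : ℝ), α i)) f

/-- The mixed multi-index partial derivative `D_z^α D_ξ^β` on `ℝ^N × ℝ^p`. -/
def DmultiProd {N p : ℕ} (α : Fin N → ℕ) (β : Fin p → ℕ)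
    (f : (Fin N → ℝ) × (Fin p → ℝ) → ℝ) : (Fin N → ℝ) × (Fin p → ℝ) → ℝ :=
  derivAlong
    (((List.finRange N).map fun i =>
        (((Pi.single i (1 : ℝ) : Fin N → ℝ), (0 : Fin p → ℝ)), α i)) ++
      ((List.finRange p).map fun j =>
        (((0 : Fin N → ℝ), (Pi.single j (1 : ℝ) : Fin p → ℝ)), β j))) f

/-- Application of the PDO `P = Σ_i a_i D^{α_i}` on `ℝ^M`. -/
def pdoApply {M : ℕ} {ι : Type} [Fintype ι]
    (a : ι → (Fin M → ℝ) → ℝ) (α : ι → Fin M → ℕ)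
    (f : (Fin M → ℝ) → ℝ) (x : Fin M → ℝ) : ℝ :=
  ∑ i, a i x * Dmulti (α i) f x

/-- The formal adjoint `P*ψ = Σ_i (−1)^{|α_i|} D^{α_i}(a_i ψ)` on `ℝ^M`. -/
def pdoAdj {M : ℕ} {ι : Type} [Fintype ι]
    (a : ι → (Fin M → ℝ) → ℝ) (α : ι → Fin M → ℕ)
    (ψ : (Fin M → ℝ) → ℝ) (x : Fin M → ℝ) : ℝ :=
  ∑ i, (-1 : ℝ) ^ (∑ j, α i j) * Dmulti (α i) (fun y => a i y * ψ y) x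

/-- Application of the PDO `Σ_i b_i D_z^{α_i} D_ξ^{β_i}` on `ℝ^N × ℝ^p`. -/
def pdoApplyProd {N p : ℕ} {ι : Type} [Fintype ι]
    (b : ι → (Fin N → ℝ) × (Fin p → ℝ) → ℝ)
    (α : ι → Fin N → ℕ) (β : ι → Fin p → ℕ)
    (f : (Fin N → ℝ) × (Fin p → ℝ) → ℝ) (w : (Fin N → ℝ) × (Fin p → ℝ)) : ℝ :=
  ∑ i, b i w * DmultiProd (α i) (β i) f w

/-- The formal adjoint of `Σ_i b_i D_z^{α_i} D_ξ^{β_i}` on `ℝ^N × ℝ^p`. -/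
def pdoAdjProd {N p : ℕ} {ι : Type} [Fintype ι]
    (b : ι → (Fin N → ℝ) × (Fin p → ℝ) → ℝ)
    (α : ι → Fin N → ℕ) (β : ι → Fin p → ℕ)
    (ψ : (Fin N → ℝ) × (Fin p → ℝ) → ℝ) (w : (Fin N → ℝ) × (Fin p → ℝ)) : ℝ :=
  ∑ i, (-1 : ℝ) ^ ((∑ j, α i j) + ∑ j, β i j) *
    DmultiProd (α i) (β i) (fun v => b i v * ψ v) w

/-- `Γ` is a global fundamental solution on `ℝ^M` for the operator with data `(a, α)`. -/
def IsFundSol {M : ℕ} {ι : Type} [Fintype ι]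
    (a : ι → (Fin M → ℝ) → ℝ) (α : ι → Fin M → ℕ)
    (Γ : (Fin M → ℝ) → (Fin M → ℝ) → ℝ) : Prop :=
  ∀ x : Fin M → ℝ,
    LocallyIntegrable (Γ x) volume ∧
    ∀ φ : (Fin M → ℝ) → ℝ, ContDiff ℝ (⊤ : ℕ∞) φ → HasCompactSupport φ →
      ∫ y, Γ x y * pdoAdj a α φ y = -φ x

/-- `Γ̃` is a global fundamental solution on `ℝ^N × ℝ^p` for the operator with data
`(b, α, β)`. -/
def IsFundSolProd {N p : ℕ} {ι : Type} [Fintype ι]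
    (b : ι → (Fin N → ℝ) × (Fin p → ℝ) → ℝ)
    (α : ι → Fin N → ℕ) (β : ι → Fin p → ℕ)
    (Γ : (Fin N → ℝ) × (Fin p → ℝ) → (Fin N → ℝ) × (Fin p → ℝ) → ℝ) : Prop :=
  ∀ w : (Fin N → ℝ) × (Fin p → ℝ),
    LocallyIntegrable (Γ w) volume ∧
    ∀ ψ : (Fin N → ℝ) × (Fin p → ℝ) → ℝ,
      ContDiff ℝ (⊤ : ℕ∞) ψ → HasCompactSupport ψ →
      ∫ v, Γ w v * pdoAdjProd b α β ψ v = -ψ w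


/-! Test `Γ̃((z,0);·)` against `ψ_j = φ ⊗ θ_j`. By (S.1),
`P̃*ψ_j = (P*φ) ⊗ θ_j + Σ r*_{α,β} (D^α φ ⊗ D^β θ_j)`: these functions are supported in
`supp φ × ℝ^p`, where `Γ̃((z,0);·)` is integrable by (ii), and bounded uniformly in `j` by (S.2).
They converge a.e. to `P*φ ⊗ 1`: `θ_j = 1` eventually, and all derivatives of `θ_j` vanish at
almost every point of the plateau `{θ_j = 1}` (at its density points). Dominated convergence turns
`∫ Γ̃ P̃*ψ_j = -φ(z) θ_j(0)` into `∫ Γ̃ (P*φ ⊗ 1) = -φ(z)`, and Fubini integrates out `η`. -/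

open Topology

lemma HasCompactSupport.tensor {E F : Type*} [TopologicalSpace E] [R1Space E]
    [TopologicalSpace F] [R1Space F] {f : E → ℝ} {g : F → ℝ} (hf : HasCompactSupport f)
    (hg : HasCompactSupport g) : HasCompactSupport (fun a : E × F => f a.1 * g a.2) :=
  HasCompactSupport.intro (hf.prod hg) fun a ha => by
    rcases not_and_or.1 ha with h | h <;> simp [image_eq_zero_of_notMem_tsupport h]

section Calculus

variable {E F : Type*} [NormedAddCommGroup E] [NormedSpace ℝ E]
  [NormedAddCommGroup F] [NormedSpace ℝ F]

lemma contDiff_dirDeriv {f : E → ℝ} (hf : ContDiff ℝ (⊤ : ℕ∞) f) (v : E) :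
    ContDiff ℝ (⊤ : ℕ∞) (dirDeriv v f) :=
  (hf.fderiv_right (by simp)).clm_apply contDiff_const

lemma contDiff_dirDerivIter {f : E → ℝ} (hf : ContDiff ℝ (⊤ : ℕ∞) f) (v : E) (k : ℕ) :
    ContDiff ℝ (⊤ : ℕ∞) (dirDerivIter v k f) := by
  induction k with
  | zero => exact hf
  | succ k ih => exact contDiff_dirDeriv ih v

lemma contDiff_derivAlong {f : E → ℝ} (hf : ContDiff ℝ (⊤ : ℕ∞) f) (l : List (E × ℕ)) :
    ContDiff ℝ (⊤ : ℕ∞) (derivAlong l f) := by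
  induction l with
  | nil => exact hf
  | cons e l ih => exact contDiff_dirDerivIter ih e.1 e.2

lemma tsupport_dirDerivIter_subset (f : E → ℝ) (v : E) (k : ℕ) :
    tsupport (dirDerivIter v k f) ⊆ tsupport f := by
  induction k with
  | zero => exact subset_rfl
  | succ k ih => exact (tsupport_fderiv_apply_subset ℝ v).trans ih

lemma tsupport_derivAlong_subset (f : E → ℝ) (l : List (E × ℕ)) :
    tsupport (derivAlong l f) ⊆ tsupport f := by
  induction l with
  | nil => exact subset_rfl
  | cons e l ih => exact (tsupport_dirDerivIter_subset _ e.1 e.2).trans ih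

lemma derivAlong_of_notMem_tsupport {f : E → ℝ} (l : List (E × ℕ)) {x : E}
    (hx : x ∉ tsupport f) : derivAlong l f x = 0 :=
  image_eq_zero_of_notMem_tsupport fun h => hx (tsupport_derivAlong_subset f l h)

lemma derivAlong_append (l₁ l₂ : List (E × ℕ)) (f : E → ℝ) :
    derivAlong (l₁ ++ l₂) f = derivAlong l₁ (derivAlong l₂ f) := by
  induction l₁ with
  | nil => rfl
  | cons e l ih => simp only [List.cons_append, derivAlong, ih]

lemma derivAlong_of_forall_snd_eq_zero (f : E → ℝ) {l : List (E × ℕ)}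
    (hl : ∀ e ∈ l, e.2 = 0) : derivAlong l f = f := by
  induction l with
  | nil => rfl
  | cons e l ih =>
    simp only [derivAlong, hl e List.mem_cons_self,
      ih fun e' he' => hl e' (List.mem_cons_of_mem _ he')]
    rfl

lemma dirDeriv_tensor {f : E → ℝ} {g : F → ℝ} (hf : Differentiable ℝ f)
    (hg : Differentiable ℝ g) (v : E) (w : F) :
    dirDeriv (v, w) (fun a : E × F => f a.1 * g a.2)
      = fun a => dirDeriv v f a.1 * g a.2 + f a.1 * dirDeriv w g a.2 := by
  funext a
  have hfst := (hf a.1).hasFDerivAt.comp a (hasFDerivAt_fst (p := a))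
  have hsnd := (hg a.2).hasFDerivAt.comp a (hasFDerivAt_snd (p := a))
  have hmul := (hfst.mul hsnd).fderiv
  simp only [Function.comp_def] at hmul
  change fderiv ℝ ((fun x : E × F => f x.1) * fun x => g x.2) a (v, w) = _
  rw [hmul]
  simp only [dirDeriv, add_apply, smul_apply,
    ContinuousLinearMap.comp_apply, ContinuousLinearMap.coe_fst', ContinuousLinearMap.coe_snd',
    smul_eq_mul]
  ring

lemma dirDeriv_zero (f : E → ℝ) : dirDeriv 0 f = 0 := by
  funext x
  simp [dirDeriv]

lemma derivAlong_tensor_fst {f : E → ℝ} {g : F → ℝ} (hf : ContDiff ℝ (⊤ : ℕ∞) f)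
    (hg : Differentiable ℝ g) (l : List (E × ℕ)) :
    derivAlong (l.map fun e => ((e.1, (0 : F)), e.2)) (fun a => f a.1 * g a.2)
      = fun a => derivAlong l f a.1 * g a.2 := by
  induction l with
  | nil => rfl
  | cons e l ih =>
    simp only [List.map_cons, derivAlong, ih]
    induction e.2 with
    | zero => rfl
    | succ k ihk =>
      simp only [dirDerivIter, ihk]
      rw [dirDeriv_tensor ((contDiff_dirDerivIter (contDiff_derivAlong hf l) e.1 k).differentiable
        (by simp)) hg, dirDeriv_zero]
      simp

lemma derivAlong_tensor_snd {f : E → ℝ} {g : F → ℝ} (hf : Differentiable ℝ f)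
    (hg : ContDiff ℝ (⊤ : ℕ∞) g) (l : List (F × ℕ)) :
    derivAlong (l.map fun e => (((0 : E), e.1), e.2)) (fun a => f a.1 * g a.2)
      = fun a => f a.1 * derivAlong l g a.2 := by
  induction l with
  | nil => rfl
  | cons e l ih =>
    simp only [List.map_cons, derivAlong, ih]
    induction e.2 with
    | zero => rfl
    | succ k ihk =>
      simp only [dirDerivIter, ihk]
      rw [dirDeriv_tensor hf
        ((contDiff_dirDerivIter (contDiff_derivAlong hg l) e.1 k).differentiable (by simp)),
        dirDeriv_zero]
      simp

end Calculus

section Operators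

variable {N p M : ℕ}

lemma DmultiProd_tensor {f : (Fin N → ℝ) → ℝ} {g : (Fin p → ℝ) → ℝ}
    (hf : ContDiff ℝ (⊤ : ℕ∞) f) (hg : ContDiff ℝ (⊤ : ℕ∞) g)
    (α : Fin N → ℕ) (β : Fin p → ℕ) :
    DmultiProd α β (fun a => f a.1 * g a.2) = fun a => Dmulti α f a.1 * Dmulti β g a.2 := by
  rw [DmultiProd, derivAlong_append]
  have h := derivAlong_tensor_snd (E := Fin N → ℝ) (hf.differentiable (by simp)) hg
    ((List.finRange p).map fun j => (Pi.single j (1 : ℝ), β j))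
  have h' := derivAlong_tensor_fst hf ((contDiff_derivAlong hg
    ((List.finRange p).map fun j => (Pi.single j (1 : ℝ), β j))).differentiable (by simp))
    ((List.finRange N).map fun i => (Pi.single i (1 : ℝ), α i))
  simp only [List.map_map, Function.comp_def] at h h'
  rw [h, h']
  rfl

lemma Dmulti_zero (f : (Fin M → ℝ) → ℝ) : Dmulti 0 f = f :=
  derivAlong_of_forall_snd_eq_zero f (by simp)

lemma Dmulti_of_notMem_tsupport {f : (Fin M → ℝ) → ℝ} (α : Fin M → ℕ) {x : Fin M → ℝ}
    (hx : x ∉ tsupport f) : Dmulti α f x = 0 :=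
  derivAlong_of_notMem_tsupport _ hx

lemma HasCompactSupport.Dmulti {f : (Fin M → ℝ) → ℝ} (hf : HasCompactSupport f)
    (α : Fin M → ℕ) : HasCompactSupport (Dmulti α f) :=
  hf.mono' fun _ hx => by_contra fun h => hx (Dmulti_of_notMem_tsupport α h)

variable {ι : Type} [Fintype ι]

lemma pdoAdj_of_notMem_tsupport (a : ι → (Fin M → ℝ) → ℝ) (α : ι → Fin M → ℕ)
    {φ : (Fin M → ℝ) → ℝ} {x : Fin M → ℝ} (hx : x ∉ tsupport φ) : pdoAdj a α φ x = 0 :=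
  Finset.sum_eq_zero fun i _ => by
    rw [Dmulti_of_notMem_tsupport _ fun h => hx (tsupport_mul_subset_right h), mul_zero]

lemma HasCompactSupport.pdoAdj {φ : (Fin M → ℝ) → ℝ} (hφ : HasCompactSupport φ)
    (a : ι → (Fin M → ℝ) → ℝ) (α : ι → Fin M → ℕ) : HasCompactSupport (pdoAdj a α φ) :=
  hφ.mono' fun _ hx => by_contra fun h => hx (pdoAdj_of_notMem_tsupport a α h)

lemma continuous_pdoAdj {a : ι → (Fin M → ℝ) → ℝ} (ha : ∀ i, ContDiff ℝ (⊤ : ℕ∞) (a i))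
    (α : ι → Fin M → ℕ) {φ : (Fin M → ℝ) → ℝ} (hφ : ContDiff ℝ (⊤ : ℕ∞) φ) :
    Continuous (pdoAdj a α φ) :=
  continuous_finsetSum _ fun i _ =>
    continuous_const.mul (contDiff_derivAlong ((ha i).mul hφ) _).continuous

lemma continuous_pdoAdjProd {b : ι → (Fin N → ℝ) × (Fin p → ℝ) → ℝ}
    (hb : ∀ i, ContDiff ℝ (⊤ : ℕ∞) (b i)) (α : ι → Fin N → ℕ) (β : ι → Fin p → ℕ)
    {ψ : (Fin N → ℝ) × (Fin p → ℝ) → ℝ} (hψ : ContDiff ℝ (⊤ : ℕ∞) ψ) :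
    Continuous (pdoAdjProd b α β ψ) :=
  continuous_finsetSum _ fun i _ =>
    continuous_const.mul (contDiff_derivAlong ((hb i).mul hψ) _).continuous

lemma pdoAdjProd_comp_fst_tensor {a : ι → (Fin N → ℝ) → ℝ}
    (ha : ∀ i, ContDiff ℝ (⊤ : ℕ∞) (a i)) (α : ι → Fin N → ℕ) {φ : (Fin N → ℝ) → ℝ}
    (hφ : ContDiff ℝ (⊤ : ℕ∞) φ)
    {θ : (Fin p → ℝ) → ℝ} (hθ : ContDiff ℝ (⊤ : ℕ∞) θ) (v : (Fin N → ℝ) × (Fin p → ℝ)) :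
    pdoAdjProd (fun i w => a i w.1) α (fun _ => 0) (fun w => φ w.1 * θ w.2) v
      = pdoAdj a α φ v.1 * θ v.2 := by
  simp only [pdoAdjProd, pdoAdj, Finset.sum_mul, Pi.zero_apply, Finset.sum_const_zero, add_zero]
  refine Finset.sum_congr rfl fun i _ => ?_
  have h := DmultiProd_tensor ((ha i).mul hφ) hθ (α i) 0
  simp only [Dmulti_zero, mul_assoc] at h ⊢
  rw [h]

end Operators

section LevelSets

variable {E : Type*} [NormedAddCommGroup E] [NormedSpace ℝ E] [FiniteDimensional ℝ E]
  [MeasurableSpace E] [BorelSpace E] {μ : Measure E} [μ.IsAddHaarMeasure] {s : Set E}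

lemma ae_restrict_fderiv_eq_zero {u : E → ℝ} (hu : Differentiable ℝ u)
    (hs : MeasurableSet s) {c : ℝ} (hc : ∀ᵐ x ∂μ.restrict s, u x = c) :
    ∀ᵐ x ∂μ.restrict s, fderiv ℝ u x = 0 := by
  have hlevel : MeasurableSet (u ⁻¹' {c}) :=
    hu.continuous.measurable (measurableSet_singleton c)
  set t := u ⁻¹' {c} ∩ s
  rw [← Measure.restrict_eq_self_of_ae_mem (μ := μ.restrict s) (s := u ⁻¹' {c}) hc,
    Measure.restrict_restrict hlevel]
  rcases subsingleton_or_nontrivial E with _ | _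
  · exact ae_of_all _ fun x => ContinuousLinearMap.ext fun v => by simp [Subsingleton.elim v 0]
  -- `x ↦ u x • e` is constant on `t`, so `ApproximatesLinearOn.norm_fderiv_sub_le` (a
  -- density-point argument, stated for maps `E → E`) kills its derivative a.e. on `t`.
  obtain ⟨e, he⟩ := exists_ne (0 : E)
  have hconst : ApproximatesLinearOn (fun x => u x • e) (0 : E →L[ℝ] E) t 0 :=
    fun x hx y hy => by simp [show u x = c from hx.1, show u y = c from hy.1]
  filter_upwards [hconst.norm_fderiv_sub_le μ (hlevel.inter hs)
    (fun x => (fderiv ℝ u x).smulRight e)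
    fun x _ => ((hu x).hasFDerivAt.smul_const e).hasFDerivWithinAt] with x hx
  simpa [he] using hx

lemma ae_restrict_dirDerivIter_eq_zero {g : E → ℝ} (hg : ContDiff ℝ (⊤ : ℕ∞) g)
    (hs : MeasurableSet s) {c : ℝ} (hc : ∀ᵐ x ∂μ.restrict s, g x = c) (v : E) {k : ℕ}
    (hk : k ≠ 0) : ∀ᵐ x ∂μ.restrict s, dirDerivIter v k g x = 0 := by
  induction k with
  | zero => exact absurd rfl hk
  | succ k ih =>
    have hdiff := (contDiff_dirDerivIter hg v k).differentiable (by simp)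
    refine Filter.Eventually.mono ?_ fun x (hx : fderiv ℝ (dirDerivIter v k g) x = 0) =>
      by simp [dirDerivIter, dirDeriv, hx]
    rcases k with _ | k
    · exact ae_restrict_fderiv_eq_zero hdiff hs hc
    · exact ae_restrict_fderiv_eq_zero hdiff hs (ih k.succ_ne_zero)

lemma ae_restrict_derivAlong_eq_zero {g : E → ℝ} (hg : ContDiff ℝ (⊤ : ℕ∞) g)
    (hs : MeasurableSet s) {c : ℝ} (hc : ∀ᵐ x ∂μ.restrict s, g x = c) {l : List (E × ℕ)}
    (hl : ∃ e ∈ l, e.2 ≠ 0) : ∀ᵐ x ∂μ.restrict s, derivAlong l g x = 0 := by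
  induction l with
  | nil => simp at hl
  | cons e l ih =>
    change ∀ᵐ x ∂μ.restrict s, dirDerivIter e.1 e.2 (derivAlong l g) x = 0
    by_cases hl' : ∃ e' ∈ l, e'.2 ≠ 0
    · rcases eq_or_ne e.2 0 with he | he
      · simpa [he, dirDerivIter] using ih hl'
      · exact ae_restrict_dirDerivIter_eq_zero (contDiff_derivAlong hg l) hs (ih hl') e.1 he
    · push Not at hl'
      have he : e.2 ≠ 0 := by
        obtain ⟨e', he', hne⟩ := hl
        rcases List.mem_cons.1 he' with rfl | he'
        exacts [hne, absurd (hl' e' he') hne]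
      rw [derivAlong_of_forall_snd_eq_zero g hl']
      exact ae_restrict_dirDerivIter_eq_zero hg hs hc e.1 he

end LevelSets

lemma ae_Dmulti_eq_zero_of_eq {M : ℕ} {β : Fin M → ℕ} (hβ : β ≠ 0) {g : (Fin M → ℝ) → ℝ}
    (hg : ContDiff ℝ (⊤ : ℕ∞) g) (c : ℝ) : ∀ᵐ x, g x = c → Dmulti β g x = 0 := by
  have hs : MeasurableSet {x | g x = c} := hg.continuous.measurable (measurableSet_singleton c)
  refine ae_imp_of_ae_restrict (ae_restrict_derivAlong_eq_zero hg hs (ae_restrict_mem hs) ?_)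
  obtain ⟨j, hj⟩ := Function.ne_iff.1 hβ
  exact ⟨(Pi.single j 1, β j), List.mem_map_of_mem (List.mem_finRange j), hj⟩

lemma eventually_eq_one_of_monotone_of_iUnion {α : Type*} {θ : ℕ → α → ℝ}
    (hmono : Monotone fun j => {x | θ j x = 1}) (hunion : ⋃ j, {x | θ j x = 1} = Set.univ)
    (x : α) : ∀ᶠ j in atTop, θ j x = 1 := by
  obtain ⟨j₀, hj₀⟩ := Set.mem_iUnion.1 (hunion ▸ Set.mem_univ x)
  exact eventually_atTop.2 ⟨j₀, fun j hj => hmono hj hj₀⟩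

lemma ae_eventually_Dmulti_eq_zero_of_monotone_of_iUnion {M : ℕ} {ι : Type*} [Countable ι]
    {β : ι → Fin M → ℕ} (hβ : ∀ i, β i ≠ 0) {θ : ℕ → (Fin M → ℝ) → ℝ}
    (hθ : ∀ j, ContDiff ℝ (⊤ : ℕ∞) (θ j)) (hmono : Monotone fun j => {x | θ j x = 1})
    (hunion : ⋃ j, {x | θ j x = 1} = Set.univ) :
    ∀ᵐ x, ∀ᶠ j in atTop, θ j x = 1 ∧ ∀ i, Dmulti (β i) (θ j) x = 0 := by
  have h : ∀ᵐ x, ∀ j i, θ j x = 1 → Dmulti (β i) (θ j) x = 0 :=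
    ae_all_iff.2 fun j => ae_all_iff.2 fun i => ae_Dmulti_eq_zero_of_eq (hβ i) (hθ j) 1
  filter_upwards [h] with x hx
  filter_upwards [eventually_eq_one_of_monotone_of_iUnion hmono hunion x] with j hj
  exact ⟨hj, fun i => hx j i hj⟩

section Integration

variable {X Y : Type*} [MeasurableSpace X] [MeasurableSpace Y]

lemma locallyIntegrable_integral_of_integrableOn_prod [TopologicalSpace X] [LocallyCompactSpace X]
    {μ : Measure X} {ν : Measure Y} [SFinite μ] [SFinite ν] {f : X × Y → ℝ}
    (hf : ∀ K, IsCompact K → IntegrableOn f (K ×ˢ Set.univ) (μ.prod ν)) :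
    LocallyIntegrable (fun x => ∫ y, f (x, y) ∂ν) μ := by
  refine locallyIntegrable_iff.2 fun K hK => ?_
  have h := hf K hK
  rw [IntegrableOn, ← Measure.prod_restrict, Measure.restrict_univ] at h
  exact h.integral_prod_left

lemma integral_integral_mul_eq_setIntegral_prod {μ : Measure X} {ν : Measure Y} [SFinite μ]
    [SFinite ν] {f : X × Y → ℝ} {g : X → ℝ} {K : Set X}
    (hf : IntegrableOn f (K ×ˢ Set.univ) (μ.prod ν)) (hg : AEStronglyMeasurable g μ) {C : ℝ}
    (hgC : ∀ x, |g x| ≤ C) (hgK : ∀ x ∉ K, g x = 0) :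
    ∫ x, (∫ y, f (x, y) ∂ν) * g x ∂μ = ∫ v in K ×ˢ Set.univ, f v * g v.1 ∂μ.prod ν := by
  have hfg : ∀ v ∉ K ×ˢ Set.univ, f v * g v.1 = 0 := fun v hv => by
    simp [hgK v.1 fun h => hv ⟨h, trivial⟩]
  have hint : Integrable (fun v => f v * g v.1) (μ.prod ν) :=
    IntegrableOn.integrable_of_forall_notMem_eq_zero
      (hf.mul_bdd (hg.comp_fst.restrict) (ae_of_all _ fun v => hgC v.1)) hfg
  rw [setIntegral_eq_integral_of_forall_compl_eq_zero hfg, integral_prod _ hint]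
  simp_rw [integral_mul_const]

lemma tendsto_integral_mul_of_ae_abs_le {μ : Measure X} {Γ : X → ℝ} (hΓ : Integrable Γ μ)
    {g : ℕ → X → ℝ} {g' : X → ℝ} (hg : ∀ j, AEStronglyMeasurable (g j) μ) {C : ℝ}
    (hC : ∀ j, ∀ᵐ x ∂μ, |g j x| ≤ C)
    (hlim : ∀ᵐ x ∂μ, Tendsto (fun j => g j x) atTop (𝓝 (g' x))) :
    Tendsto (fun j => ∫ x, Γ x * g j x ∂μ) atTop (𝓝 (∫ x, Γ x * g' x ∂μ)) := by
  refine tendsto_integral_of_dominated_convergence (fun x => ‖Γ x‖ * C)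
    (fun j => hΓ.1.mul (hg j)) (hΓ.norm.mul_const C) (fun j => ?_)
    (hlim.mono fun x hx => hx.const_mul (Γ x))
  filter_upwards [hC j] with x hx
  rw [norm_mul, Real.norm_eq_abs (g j x)]
  exact mul_le_mul_of_nonneg_left hx (norm_nonneg _)

end Integration

lemma abs_mul_add_sum_le {ι : Type*} [Fintype ι] {a t A : ℝ} {r b d B R : ι → ℝ}
    (ha : |a| ≤ A) (ht : |t| ≤ 1) (hb : ∀ i, |b i| ≤ B i) (hrd : ∀ i, |r i * d i| ≤ R i) :
    |a * t + ∑ i, r i * (b i * d i)| ≤ A + ∑ i, B i * R i := by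
  refine (abs_add_le _ _).trans (add_le_add ?_ ((Finset.abs_sum_le_sum_abs _ _).trans
    (Finset.sum_le_sum fun i _ => ?_)))
  · rw [abs_mul]
    nlinarith [abs_nonneg a, abs_nonneg t]
  · rw [show r i * (b i * d i) = b i * (r i * d i) by ring, abs_mul]
    exact mul_le_mul (hb i) (hrd i) (abs_nonneg _) ((abs_nonneg _).trans (hb i))

section CutoffExpansion

variable {X : Type*} {p : ℕ} {ι : Type*} [Fintype ι] {g : ℕ → X × (Fin p → ℝ) → ℝ}
  {A : X → ℝ} {r : ι → X × (Fin p → ℝ) → ℝ} {b : ι → X → ℝ} {β : ι → Fin p → ℕ}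
  {θ : ℕ → (Fin p → ℝ) → ℝ}

lemma exists_abs_le_of_eq_cutoff_expansion {K : Set X} (hA : ∃ C, ∀ x, |A x| ≤ C)
    (hb : ∀ i, ∃ C, ∀ x, |b i x| ≤ C)
    (hr : ∀ i, ∃ C, ∀ x ∈ K, ∀ ξ j, |r i (x, ξ) * Dmulti (β i) (θ j) ξ| ≤ C)
    (hθ : ∀ j ξ, θ j ξ ∈ Set.Icc (0 : ℝ) 1)
    (hg : ∀ j v, g j v = A v.1 * θ j v.2 + ∑ i, r i v * (b i v.1 * Dmulti (β i) (θ j) v.2)) :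
    ∃ C, ∀ j, ∀ v : X × (Fin p → ℝ), v.1 ∈ K → |g j v| ≤ C := by
  obtain ⟨CA, hCA⟩ := hA
  choose Cb hCb using hb
  choose Cr hCr using hr
  refine ⟨CA + ∑ i, Cb i * Cr i, fun j v hv => ?_⟩
  rw [hg]
  exact abs_mul_add_sum_le (hCA _) (abs_le.2 ⟨by linarith [(hθ j v.2).1], (hθ j v.2).2⟩)
    (fun i => hCb i _) (fun i => hCr i v.1 hv v.2 j)

lemma eq_zero_of_eq_cutoff_expansion {K : Set X} (hA : ∀ x ∉ K, A x = 0)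
    (hb : ∀ i, ∀ x ∉ K, b i x = 0)
    (hg : ∀ j v, g j v = A v.1 * θ j v.2 + ∑ i, r i v * (b i v.1 * Dmulti (β i) (θ j) v.2))
    (j : ℕ) {v : X × (Fin p → ℝ)} (hv : v.1 ∉ K) : g j v = 0 := by
  simp [hg, hA _ hv, hb _ _ hv]

lemma ae_tendsto_of_eq_cutoff_expansion [MeasurableSpace X] {μ : Measure X} [SFinite μ]
    [Countable ι] (hβ : ∀ i, β i ≠ 0) (hθ : ∀ j, ContDiff ℝ (⊤ : ℕ∞) (θ j))
    (hmono : Monotone fun j => {ξ | θ j ξ = 1}) (hunion : ⋃ j, {ξ | θ j ξ = 1} = Set.univ)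
    (hg : ∀ j v, g j v = A v.1 * θ j v.2 + ∑ i, r i v * (b i v.1 * Dmulti (β i) (θ j) v.2)) :
    ∀ᵐ v ∂μ.prod volume, Tendsto (fun j => g j v) atTop (𝓝 (A v.1)) := by
  filter_upwards [Measure.quasiMeasurePreserving_snd.ae
    (ae_eventually_Dmulti_eq_zero_of_monotone_of_iUnion hβ hθ hmono hunion)] with v hv
  refine tendsto_const_nhds.congr' (hv.mono fun j hj => ?_)
  simp [hg, hj.1, hj.2]

end CutoffExpansion

theorem saturation_fundamental_solution_general
    (N p : ℕ)
    -- the operator P on ℝ^N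
    (ιP : Type) [Fintype ιP]
    (aP : ιP → (Fin N → ℝ) → ℝ) (αP : ιP → Fin N → ℕ)
    (haP : ∀ i, ContDiff ℝ (⊤ : ℕ∞) (aP i))
    -- the operator P̃ on ℝ^N × ℝ^p
    (ιQ : Type) [Fintype ιQ]
    (bQ : ιQ → (Fin N → ℝ) × (Fin p → ℝ) → ℝ)
    (αQ : ιQ → Fin N → ℕ) (βQ : ιQ → Fin p → ℕ)
    (hbQ : ∀ i, ContDiff ℝ (⊤ : ℕ∞) (bQ i))
    -- (S.1) : the formal adjoint of R = P̃ − P (P acting only in the z variables)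
    -- is Σ r*_{α,β} D_z^α D_ξ^β with every term containing a ξ-derivative
    (ιR : Type) [Fintype ιR]
    (rR : ιR → (Fin N → ℝ) × (Fin p → ℝ) → ℝ)
    (αR : ιR → Fin N → ℕ) (βR : ιR → Fin p → ℕ)
    (hβR : ∀ i, βR i ≠ 0)
    (hS1 : ∀ ψ : (Fin N → ℝ) × (Fin p → ℝ) → ℝ, ContDiff ℝ (⊤ : ℕ∞) ψ →
      ∀ w : (Fin N → ℝ) × (Fin p → ℝ),
        pdoAdjProd bQ αQ βQ ψ w
          - pdoAdjProd (fun i (v : (Fin N → ℝ) × (Fin p → ℝ)) => aP i v.1)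
              αP (fun _ => (0 : Fin p → ℕ)) ψ w
        = ∑ i, rR i w * DmultiProd (αR i) (βR i) ψ w)
    -- (S.2) : the cut-off sequence
    (θ : ℕ → (Fin p → ℝ) → ℝ)
    (hθsm : ∀ j, ContDiff ℝ (⊤ : ℕ∞) (θ j))
    (hθcs : ∀ j, HasCompactSupport (θ j))
    (hθ01 : ∀ j ξ, θ j ξ ∈ Set.Icc (0 : ℝ) 1)
    (hθmono : Monotone fun j : ℕ => {ξ : Fin p → ℝ | θ j ξ = 1})
    (hθunion : (⋃ j : ℕ, {ξ : Fin p → ℝ | θ j ξ = 1}) = Set.univ)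
    (hS2 : ∀ K : Set (Fin N → ℝ), IsCompact K → ∀ i : ιR,
      ∃ C : ℝ, ∀ z ∈ K, ∀ (ξ : Fin p → ℝ) (j : ℕ),
        |rR i (z, ξ) * Dmulti (βR i) (θ j) ξ| ≤ C)
    -- the global fundamental solution of P̃
    (Γt : (Fin N → ℝ) × (Fin p → ℝ) → (Fin N → ℝ) × (Fin p → ℝ) → ℝ)
    (hΓt : IsFundSolProd bQ αQ βQ Γt)
    -- integrability assumptions (i) and (ii)
    (hii : ∀ z : Fin N → ℝ, ∀ K : Set (Fin N → ℝ), IsCompact K →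
      IntegrableOn (fun w : (Fin N → ℝ) × (Fin p → ℝ) => Γt (z, 0) w)
        (K ×ˢ (Set.univ : Set (Fin p → ℝ)))) :
    IsFundSol aP αP
      (fun z ζ => ∫ η : Fin p → ℝ, Γt (z, 0) (ζ, η)) := by
  intro z
  refine ⟨locallyIntegrable_integral_of_integrableOn_prod
    (by simpa [Measure.volume_eq_prod] using hii z), fun φ hφ hφc => ?_⟩
  set ψ : ℕ → (Fin N → ℝ) × (Fin p → ℝ) → ℝ := fun j v => φ v.1 * θ j v.2
  have hψ (j : ℕ) : ContDiff ℝ (⊤ : ℕ∞) (ψ j) :=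
    (hφ.comp contDiff_fst).mul ((hθsm j).comp contDiff_snd)
  have hexpand (j : ℕ) (v) : pdoAdjProd bQ αQ βQ (ψ j) v = pdoAdj aP αP φ v.1 * θ j v.2
      + ∑ i, rR i v * (Dmulti (αR i) φ v.1 * Dmulti (βR i) (θ j) v.2) := by
    rw [← pdoAdjProd_comp_fst_tensor haP αP hφ (hθsm j), ← sub_eq_iff_eq_add', hS1 _ (hψ j)]
    simp only [ψ, DmultiProd_tensor hφ (hθsm j)]
  obtain ⟨A, hA⟩ := (hφc.pdoAdj aP αP).exists_bound_of_continuous (continuous_pdoAdj haP αP hφ)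
  obtain ⟨C, hC⟩ := exists_abs_le_of_eq_cutoff_expansion ⟨A, hA⟩
    (fun i => (hφc.Dmulti _).exists_bound_of_continuous (contDiff_derivAlong hφ _).continuous)
    (hS2 _ hφc) hθ01 hexpand
  have hvalue : ∀ᶠ j in atTop,
      ∫ v in tsupport φ ×ˢ Set.univ, Γt (z, 0) v * pdoAdjProd bQ αQ βQ (ψ j) v = -φ z := by
    filter_upwards [eventually_eq_one_of_monotone_of_iUnion hθmono hθunion 0] with j hj
    rw [setIntegral_eq_integral_of_forall_compl_eq_zero fun v hv => by
        rw [eq_zero_of_eq_cutoff_expansion (fun _ => pdoAdj_of_notMem_tsupport aP αP)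
          (fun _ _ => Dmulti_of_notMem_tsupport _) hexpand j fun h => hv ⟨h, trivial⟩, mul_zero],
      (hΓt (z, 0)).2 (ψ j) (hψ j) (hφc.tensor (hθcs j))]
    simp [ψ, hj]
  have hlimit := tendsto_integral_mul_of_ae_abs_le (hii z _ hφc)
    (fun j => (continuous_pdoAdjProd hbQ αQ βQ (hψ j)).aestronglyMeasurable)
    (fun j => ae_restrict_of_forall_mem (hφc.isClosed.measurableSet.prod .univ)
      fun v hv => hC j v hv.1)
    (ae_restrict_of_ae (by
      rw [Measure.volume_eq_prod]
      exact ae_tendsto_of_eq_cutoff_expansion hβR hθsm hθmono hθunion hexpand))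
  rw [integral_integral_mul_eq_setIntegral_prod
    (by simpa [Measure.volume_eq_prod] using hii z _ hφc)
    (continuous_pdoAdj haP αP hφ).aestronglyMeasurable hA
    fun _ => pdoAdj_of_notMem_tsupport aP αP]
  exact tendsto_nhds_unique hlimit (tendsto_const_nhds.congr' (hvalue.mono fun _ h => h.symm))

/-- **The saturation theorem (Theorem 2.5 of Biagi–Bonfiglioli).**
Let `P = Σ_{|α|≤d} a_α D^α` be a smooth linear PDO on `ℝ^N` and let
`P̃ = Σ_{|γ|≤d̃} b_γ D^γ` be a smooth linear PDO on `ℝ^N × ℝ^p` lifting `P`.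
Assume: (S.1) the formal adjoint of `R = P̃ − P` can be written as
`R* = Σ_{β ≠ 0} r*_{α,β}(z,ξ) D_z^α D_ξ^β` with smooth coefficients;
(S.2) there is a sequence `θ_j ∈ C_c^∞(ℝ^p, [0,1])` whose sets `{θ_j = 1}` increase to
`ℝ^p`, with `|r*_{α,β}(z,ξ) D_ξ^β θ_j(ξ)| ≤ C_{α,β}(K)` uniformly for `z ∈ K` compact,
`ξ ∈ ℝ^p`, `j ∈ ℕ`.  Suppose `P̃` has a global fundamental solution `Γ̃` with
(i) `η ↦ Γ̃((z,0);(ζ,η)) ∈ L¹(ℝ^p)` for `z ≠ ζ`, and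
(ii) `(ζ,η) ↦ Γ̃((z,0);(ζ,η)) ∈ L¹(K × ℝ^p)` for every compact `K ⊆ ℝ^N`.
Then `Γ(z;ζ) = ∫_{ℝ^p} Γ̃((z,0);(ζ,η)) dη` is a global fundamental solution for `P`. -/
theorem saturation_fundamental_solution
    (N p : ℕ) (hN : 1 ≤ N) (hp : 1 ≤ p)
    -- the operator P on ℝ^N
    (ιP : Type) [Fintype ιP]
    (aP : ιP → (Fin N → ℝ) → ℝ) (αP : ιP → Fin N → ℕ)
    (haP : ∀ i, ContDiff ℝ (⊤ : ℕ∞) (aP i))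
    -- the operator P̃ on ℝ^N × ℝ^p
    (ιQ : Type) [Fintype ιQ]
    (bQ : ιQ → (Fin N → ℝ) × (Fin p → ℝ) → ℝ)
    (αQ : ιQ → Fin N → ℕ) (βQ : ιQ → Fin p → ℕ)
    (hbQ : ∀ i, ContDiff ℝ (⊤ : ℕ∞) (bQ i))
    -- P̃ lifts P : for every smooth f on ℝ^N, P̃(f ∘ π) = (Pf) ∘ π
    (hlift : ∀ f : (Fin N → ℝ) → ℝ, ContDiff ℝ (⊤ : ℕ∞) f →
      ∀ w : (Fin N → ℝ) × (Fin p → ℝ),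
        pdoApplyProd bQ αQ βQ (fun v => f v.1) w = pdoApply aP αP f w.1)
    -- (S.1) : the formal adjoint of R = P̃ − P (P acting only in the z variables)
    -- is Σ r*_{α,β} D_z^α D_ξ^β with every term containing a ξ-derivative
    (ιR : Type) [Fintype ιR]
    (rR : ιR → (Fin N → ℝ) × (Fin p → ℝ) → ℝ)
    (αR : ιR → Fin N → ℕ) (βR : ιR → Fin p → ℕ)
    (hrR : ∀ i, ContDiff ℝ (⊤ : ℕ∞) (rR i))
    (hβR : ∀ i, βR i ≠ 0)
    (hS1 : ∀ ψ : (Fin N → ℝ) × (Fin p → ℝ) → ℝ, ContDiff ℝ (⊤ : ℕ∞) ψ →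
      ∀ w : (Fin N → ℝ) × (Fin p → ℝ),
        pdoAdjProd bQ αQ βQ ψ w
          - pdoAdjProd (fun i (v : (Fin N → ℝ) × (Fin p → ℝ)) => aP i v.1)
              αP (fun _ => (0 : Fin p → ℕ)) ψ w
        = ∑ i, rR i w * DmultiProd (αR i) (βR i) ψ w)
    -- (S.2) : the cut-off sequence
    (θ : ℕ → (Fin p → ℝ) → ℝ)
    (hθsm : ∀ j, ContDiff ℝ (⊤ : ℕ∞) (θ j))
    (hθcs : ∀ j, HasCompactSupport (θ j))
    (hθ01 : ∀ j ξ, θ j ξ ∈ Set.Icc (0 : ℝ) 1)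
    (hθmono : Monotone fun j : ℕ => {ξ : Fin p → ℝ | θ j ξ = 1})
    (hθunion : (⋃ j : ℕ, {ξ : Fin p → ℝ | θ j ξ = 1}) = Set.univ)
    (hS2 : ∀ K : Set (Fin N → ℝ), IsCompact K → ∀ i : ιR,
      ∃ C : ℝ, ∀ z ∈ K, ∀ (ξ : Fin p → ℝ) (j : ℕ),
        |rR i (z, ξ) * Dmulti (βR i) (θ j) ξ| ≤ C)
    -- the global fundamental solution of P̃
    (Γt : (Fin N → ℝ) × (Fin p → ℝ) → (Fin N → ℝ) × (Fin p → ℝ) → ℝ)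
    (hΓt : IsFundSolProd bQ αQ βQ Γt)
    -- integrability assumptions (i) and (ii)
    (hi : ∀ z ζ : Fin N → ℝ, z ≠ ζ →
      Integrable (fun η : Fin p → ℝ => Γt (z, 0) (ζ, η)))
    (hii : ∀ z : Fin N → ℝ, ∀ K : Set (Fin N → ℝ), IsCompact K →
      IntegrableOn (fun w : (Fin N → ℝ) × (Fin p → ℝ) => Γt (z, 0) w)
        (K ×ˢ (Set.univ : Set (Fin p → ℝ)))) :
    IsFundSol aP αP
      (fun z ζ => ∫ η : Fin p → ℝ, Γt (z, 0) (ζ, η)) :=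
  saturation_fundamental_solution_general N p ιP aP αP haP ιQ bQ αQ βQ hbQ ιR rR αR βR hβR hS1 θ
    hθsm hθcs hθ01 hθmono hθunion hS2 Γt hΓt hii

end
end

section
/- Let p ≥ 1 be an integer and, for each k ∈ {1, …, p}, let q_k : ℝ^{k−1} → ℝ be a smooth function (so q_1 is a constant). Define Ψ : ℝ^p → ℝ^p by Ψ_k(η) = η_k + q_k(η_1, …, η_{k−1}) for k = 1, …, p. Then Ψ is a proper map; in particular ‖Ψ(η)‖ → ∞ as ‖η‖ → ∞. -/
/-!
Each coordinate of `η` is recovered from `Ψ η` as `η k = Ψ η k - q k (η_0, …, η_{k-1})`.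
So if `Ψ η` ranges over a bounded set, induction on `k` shows that every coordinate of `η` stays
bounded: the correction term is a continuous function of earlier, already bounded coordinates.
Hence preimages of compact sets are closed and bounded, i.e. compact.
-/

open Filter Bornology Set

theorem Bornology.IsBounded.image_of_continuous {X Y : Type*} [PseudoMetricSpace X]
    [ProperSpace X] [PseudoMetricSpace Y] {f : X → Y} (hf : Continuous f) {s : Set X}
    (hs : IsBounded s) :
    IsBounded (f '' s) :=
  (hs.isCompact_closure.image hf).isBounded.subset (image_mono subset_closure)

section UnitTriangular

variable {E : Type*} [NormedAddCommGroup E] {p : ℕ} {q : (k : Fin p) → (Fin k.val → E) → E}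
  {Ψ : (Fin p → E) → (Fin p → E)}

theorem continuous_of_unitTriangular (hq : ∀ k, Continuous (q k))
    (hΨ : ∀ (η : Fin p → E) (k : Fin p),
      Ψ η k = η k + q k (fun i => η ⟨i.val, i.isLt.trans k.isLt⟩)) :
    Continuous Ψ := by
  obtain rfl : Ψ = fun η k => η k + q k (fun i => η ⟨i.val, i.isLt.trans k.isLt⟩) :=
    funext fun η => funext (hΨ η)
  exact continuous_pi fun k => (continuous_apply k).add
    ((hq k).comp (continuous_pi fun i => continuous_apply _))

variable [ProperSpace E]

theorem isBounded_image_eval_of_unitTriangular (hq : ∀ k, Continuous (q k))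
    (hΨ : ∀ (η : Fin p → E) (k : Fin p),
      Ψ η k = η k + q k (fun i => η ⟨i.val, i.isLt.trans k.isLt⟩))
    {S : Set (Fin p → E)} (hS : IsBounded S) (k : Fin p) :
    IsBounded ((fun η => η k) '' (Ψ ⁻¹' S)) := by
  induction k using WellFoundedLT.induction with
  | _ k ih =>
    have hinit : IsBounded
        ((fun η (i : Fin k.val) => η ⟨i.val, i.isLt.trans k.isLt⟩) '' (Ψ ⁻¹' S)) :=
      forall_isBounded_image_eval_iff.1 fun i => by
        rw [image_image]
        exact ih _ i.isLt
    have hcorr := hinit.image_of_continuous (hq k)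
    refine ((hS.image_eval k).sub hcorr).subset ?_
    rintro _ ⟨η, hη, rfl⟩
    exact ⟨Ψ η k, ⟨Ψ η, hη, rfl⟩, _, mem_image_of_mem _ (mem_image_of_mem _ hη), by
      simp only [hΨ, add_sub_cancel_right]⟩

theorem isBounded_preimage_of_unitTriangular (hq : ∀ k, Continuous (q k))
    (hΨ : ∀ (η : Fin p → E) (k : Fin p),
      Ψ η k = η k + q k (fun i => η ⟨i.val, i.isLt.trans k.isLt⟩))
    {S : Set (Fin p → E)} (hS : IsBounded S) :
    IsBounded (Ψ ⁻¹' S) :=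
  forall_isBounded_image_eval_iff.1 (isBounded_image_eval_of_unitTriangular hq hΨ hS)

theorem isProperMap_of_unitTriangular (hq : ∀ k, Continuous (q k))
    (hΨ : ∀ (η : Fin p → E) (k : Fin p),
      Ψ η k = η k + q k (fun i => η ⟨i.val, i.isLt.trans k.isLt⟩)) :
    IsProperMap Ψ := by
  have hcont := continuous_of_unitTriangular hq hΨ
  exact isProperMap_iff_isCompact_preimage.2 ⟨hcont, fun K hK =>
    Metric.isCompact_of_isClosed_isBounded (hK.isClosed.preimage hcont)
      (isBounded_preimage_of_unitTriangular hq hΨ hK.isBounded)⟩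

end UnitTriangular

theorem triangular_map_proper_general
    (p : ℕ)
    (q : (k : Fin p) → (Fin k.val → ℝ) → ℝ)
    (hq : ∀ k, ContDiff ℝ (⊤ : ℕ∞) (q k))
    (Ψ : (Fin p → ℝ) → (Fin p → ℝ))
    (hΨ : ∀ (η : Fin p → ℝ) (k : Fin p),
      Ψ η k = η k + q k (fun i => η ⟨i.val, i.isLt.trans k.isLt⟩)) :
    IsProperMap Ψ ∧
      Tendsto (fun η : Fin p → ℝ => ‖Ψ η‖) (cocompact (Fin p → ℝ)) atTop := by
  have hproper : IsProperMap Ψ := isProperMap_of_unitTriangular (fun k => (hq k).continuous) hΨ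
  exact ⟨hproper,
    tendsto_norm_cocompact_atTop.comp (isProperMap_iff_tendsto_cocompact.1 hproper).2⟩

/-- **Triangular maps with unit diagonal are proper.**
Let `p ≥ 1` and, for each `k`, let `q_k : ℝ^{k−1} → ℝ` be smooth (depending only on the
first `k−1` coordinates). Define `Ψ : ℝ^p → ℝ^p` by `Ψ_k(η) = η_k + q_k(η_1, …, η_{k−1})`.
Then `Ψ` is a proper map; in particular `‖Ψ(η)‖ → ∞` as `‖η‖ → ∞`. -/
theorem triangular_map_proper
    (p : ℕ) (hp : 1 ≤ p)
    (q : (k : Fin p) → (Fin k.val → ℝ) → ℝ)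
    (hq : ∀ k, ContDiff ℝ (⊤ : ℕ∞) (q k))
    (Ψ : (Fin p → ℝ) → (Fin p → ℝ))
    (hΨ : ∀ (η : Fin p → ℝ) (k : Fin p),
      Ψ η k = η k + q k (fun i => η ⟨i.val, i.isLt.trans k.isLt⟩)) :
    IsProperMap Ψ ∧
      Tendsto (fun η : Fin p → ℝ => ‖Ψ η‖) (cocompact (Fin p → ℝ)) atTop :=
  triangular_map_proper_general p q hq Ψ hΨ
end

section
/- Let w = (w_1, …, w_{2(1+n)}) = (t, x, s, y) denote the coordinates of (z, ζ) ∈ ℝ^{1+n} × ℝ^{1+n}, and let Z be the first-order operator Zf(z, ζ) = Σ_{j=1}^{2(1+n)} c_j(z, ζ) ∂f/∂w_j with smooth coefficients c_j on ℝ^{2(1+n)}. Define D_λ(z, ζ) := ((λ² t, δ_λ(x)), (λ² s, δ_λ(y))) and assume that Z is D_λ-homogeneous of some degree m > 0, i.e. Z(f ∘ D_λ) = λ^m (Zf) ∘ D_λ for every λ > 0 and every f ∈ C^∞(ℝ^{2(1+n)}). Let g ∈ C^∞(Ω) be E_λ-homogeneous of degree α for some real α < −q*. Then for every (z, ζ)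 with z ≠ ζ: the function η ↦ Z{(z, ζ) ↦ g(z, ζ, η)}(z, ζ) is integrable on ℝ^p; every partial derivative ∂G/∂w_j of the function G(z, ζ) := ∫_{ℝ^p} g(z, ζ, η) dη exists at (z, ζ); and Z can pass under the integral sign, i.e. Σ_j c_j(z, ζ) ∂G/∂w_j(z, ζ) = ∫_{ℝ^p} Σ_j c_j(z, ζ) (∂g/∂w_j)(z, ζ, η) dη. -/
/-!
With the anisotropic gauge `ρ(η) = Σ_j |η_j| ^ (1/σ*_j)`, which is homogeneous of degree one
under `δ*_λ`, both `g(w, η)` and its `w`-derivative are `O(max(1, ρ(η)) ^ α)` uniformly for `w`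
in a compact neighbourhood `B` of a point with `z ≠ ζ`: on `B × {ρ ≤ 1}` this is continuity on a
compact subset of `Ω`; for `λ = ρ(η) > 1`, homogeneity gives
`g(w, η) = λ ^ α g(D_{1/λ} w, δ*_{1/λ} η)` with `δ*_{1/λ} η` on the compact sphere `{ρ = 1}` and
`D_{1/λ}` a contraction. Splitting `α = Σ_j σ*_j α / q*` over the coordinates dominates the weight
by `Π_j max(1, |η_j|) ^ (α / q*)`, integrable since `α / q* < -1`. Differentiation under the
integral sign then identifies the derivative of `G` with the integral of the derivatives of `g`,
and evaluating both at `c(z, ζ)` gives the claim.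
-/

open MeasureTheory

noncomputable section

/-- The parabolic dilation `D_λ(z, ζ) = ((λ²t, δ_λ x), (λ²s, δ_λ y))` on
`ℝ^{1+n} × ℝ^{1+n}`. -/
def Ddil {n : ℕ} (σ : Fin n → ℝ) (lam : ℝ)
    (w : (ℝ × (Fin n → ℝ)) × (ℝ × (Fin n → ℝ))) :
    (ℝ × (Fin n → ℝ)) × (ℝ × (Fin n → ℝ)) :=
  ((lam ^ 2 * w.1.1, fun i => lam ^ σ i * w.1.2 i),
   (lam ^ 2 * w.2.1, fun i => lam ^ σ i * w.2.2 i))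

/-- The dilation `E_λ(z, ζ, η) = (D_λ(z, ζ), δ*_λ(η))` on `(ℝ^{1+n} × ℝ^{1+n}) × ℝ^p`. -/
def Edil {n p : ℕ} (σ : Fin n → ℝ) (σs : Fin p → ℝ) (lam : ℝ)
    (w : ((ℝ × (Fin n → ℝ)) × (ℝ × (Fin n → ℝ))) × (Fin p → ℝ)) :
    ((ℝ × (Fin n → ℝ)) × (ℝ × (Fin n → ℝ))) × (Fin p → ℝ) :=
  (Ddil σ lam w.1, fun j => lam ^ σs j * w.2 j)

/-- The open set `Ω = {((z, ζ), η) : (z, 0) ≠ (ζ, η)}`. -/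
def OmegaSet (n p : ℕ) :
    Set (((ℝ × (Fin n → ℝ)) × (ℝ × (Fin n → ℝ))) × (Fin p → ℝ)) :=
  {w | ((w.1.1, (0 : Fin p → ℝ)) : (ℝ × (Fin n → ℝ)) × (Fin p → ℝ)) ≠ (w.1.2, w.2)}

section PartialDeriv

variable {E F G : Type*} [NormedAddCommGroup E] [NormedSpace ℝ E]
  [NormedAddCommGroup F] [NormedSpace ℝ F] [NormedAddCommGroup G] [NormedSpace ℝ G]

lemma DifferentiableAt.hasFDerivAt_comp_prodMk_left {g : E × F → G} {x : E} {y : F}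
    (hg : DifferentiableAt ℝ g (x, y)) :
    HasFDerivAt (fun x' => g (x', y)) ((fderiv ℝ g (x, y)).comp (.inl ℝ E F)) x :=
  hg.hasFDerivAt.comp x (hasFDerivAt_prodMk_left x y)

lemma ContDiffOn.continuousOn_fderiv_prodMk_left {g : E × F → G} {U : Set (E × F)}
    (hU : IsOpen U) (hg : ContDiffOn ℝ 1 g U) :
    ContinuousOn (fun q : E × F => fderiv ℝ (fun x => g (x, q.2)) q.1) U := by
  refine ((hg.continuousOn_fderiv_of_isOpen hU le_rfl).clm_comp
    (continuousOn_const (c := ContinuousLinearMap.inl ℝ E F))).congr fun q hq => ?_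
  exact ((hg.differentiableOn one_ne_zero).differentiableAt
    (hU.mem_nhds hq)).hasFDerivAt_comp_prodMk_left.fderiv

lemma norm_fderiv_const_mul_comp_le {f : E → ℝ} {L : E →L[ℝ] E} (hL : ‖L‖ ≤ 1) {c : ℝ}
    (hc : 0 ≤ c) {x : E} (hf : DifferentiableAt ℝ f (L x)) :
    ‖fderiv ℝ (fun y => c * f (L y)) x‖ ≤ c * ‖fderiv ℝ f (L x)‖ := by
  have hderiv : HasFDerivAt (fun y => c * f (L y)) (c • (fderiv ℝ f (L x)).comp L) x :=
    (hf.hasFDerivAt.comp x L.hasFDerivAt).const_mul c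
  rw [hderiv.fderiv, norm_smul, Real.norm_of_nonneg hc]
  gcongr
  calc ‖(fderiv ℝ f (L x)).comp L‖ ≤ ‖fderiv ℝ f (L x)‖ * ‖L‖ :=
        ContinuousLinearMap.opNorm_comp_le _ _
    _ ≤ ‖fderiv ℝ f (L x)‖ := mul_le_of_le_one_right (norm_nonneg _) hL

variable [MeasurableSpace F] [OpensMeasurableSpace F] [SecondCountableTopology F]
  {μ : Measure F}

lemma ContDiffOn.integrable_fderiv_and_hasFDerivAt_integral {g : E × F → ℝ} {U : Set (E × F)}
    (hU : IsOpen U) (hg : ContDiffOn ℝ 1 g U) {s : Set E} {x₀ : E} (hs : s ∈ nhds x₀)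
    (hsU : ∀ x ∈ s, ∀ y, (x, y) ∈ U) {bound : F → ℝ} (hbound_int : Integrable bound μ)
    (hbound : ∀ x ∈ s, ∀ y,
      |g (x, y)| ≤ bound y ∧ ‖fderiv ℝ (fun x' => g (x', y)) x‖ ≤ bound y) :
    Integrable (fun y => fderiv ℝ (fun x => g (x, y)) x₀) μ ∧
      HasFDerivAt (fun x => ∫ y, g (x, y) ∂μ) (∫ y, fderiv ℝ (fun x => g (x, y)) x₀ ∂μ) x₀ := by
  have hx₀ := mem_of_mem_nhds hs
  have hslice : ∀ x ∈ s, Continuous fun y => g (x, y) := fun x hx =>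
    hg.continuousOn.comp_continuous (Continuous.prodMk_right x) (hsU x hx)
  have hslice' : Continuous fun y => fderiv ℝ (fun x => g (x, y)) x₀ :=
    (hg.continuousOn_fderiv_prodMk_left hU).comp_continuous (Continuous.prodMk_right x₀)
      (hsU x₀ hx₀)
  have hint : Integrable (fun y => fderiv ℝ (fun x => g (x, y)) x₀) μ :=
    hbound_int.mono' hslice'.aestronglyMeasurable (ae_of_all _ fun y => (hbound x₀ hx₀ y).2)
  refine ⟨hint, hasFDerivAt_integral_of_dominated_of_fderiv_le hs
    (Filter.eventually_of_mem hs fun x hx => (hslice x hx).aestronglyMeasurable)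
    (hbound_int.mono' (hslice x₀ hx₀).aestronglyMeasurable
      (ae_of_all _ fun y => (hbound x₀ hx₀ y).1))
    hslice'.aestronglyMeasurable (ae_of_all _ fun y x hx => (hbound x hx y).2) hbound_int
    (ae_of_all _ fun y x hx => ?_)⟩
  exact ((hg.differentiableOn one_ne_zero).differentiableAt
    (hU.mem_nhds (hsU x hx y))).hasFDerivAt_comp_prodMk_left.differentiableAt.hasFDerivAt

end PartialDeriv

section Gauge

variable {p : ℕ} {σs : Fin p → ℝ}

def anisoDil (σs : Fin p → ℝ) (μ : ℝ) (η : Fin p → ℝ) : Fin p → ℝ := fun j => μ ^ σs j * η j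

def anisoGauge (σs : Fin p → ℝ) (η : Fin p → ℝ) : ℝ := ∑ j, |η j| ^ (σs j)⁻¹

lemma continuous_anisoGauge (hσs : ∀ j, 0 ≤ σs j) : Continuous (anisoGauge σs) :=
  continuous_finsetSum _ fun j _ =>
    (continuous_apply j).abs.rpow_const fun _ => Or.inr (inv_nonneg.2 (hσs j))

lemma anisoGauge_nonneg (η : Fin p → ℝ) : 0 ≤ anisoGauge σs η :=
  Finset.sum_nonneg fun _ _ => by positivity

lemma anisoGauge_zero (hσs : ∀ j, σs j ≠ 0) : anisoGauge σs 0 = 0 := by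
  simp [anisoGauge, Real.zero_rpow (inv_ne_zero (hσs _))]

lemma ne_zero_of_anisoGauge_ne_zero (hσs : ∀ j, σs j ≠ 0) {η : Fin p → ℝ}
    (hη : anisoGauge σs η ≠ 0) : η ≠ 0 := by
  rintro rfl
  exact hη (anisoGauge_zero hσs)

lemma anisoGauge_anisoDil (hσs : ∀ j, σs j ≠ 0) {μ : ℝ} (hμ : 0 ≤ μ) (η : Fin p → ℝ) :
    anisoGauge σs (anisoDil σs μ η) = μ * anisoGauge σs η := by
  rw [anisoGauge, anisoGauge, Finset.mul_sum]
  refine Finset.sum_congr rfl fun j _ => ?_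
  rw [anisoDil, abs_mul, abs_of_nonneg (Real.rpow_nonneg hμ _),
    Real.mul_rpow (Real.rpow_nonneg hμ _) (abs_nonneg _), ← Real.rpow_mul hμ,
    mul_inv_cancel₀ (hσs j), Real.rpow_one]

lemma abs_le_anisoGauge_rpow (hσs : ∀ j, 0 < σs j) (η : Fin p → ℝ) (j : Fin p) :
    |η j| ≤ anisoGauge σs η ^ σs j := by
  have h : |η j| ^ (σs j)⁻¹ ≤ anisoGauge σs η :=
    Finset.single_le_sum (f := fun j => |η j| ^ (σs j)⁻¹) (fun _ _ => by positivity)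
      (Finset.mem_univ j)
  calc |η j| = (|η j| ^ (σs j)⁻¹) ^ σs j := by
        rw [← Real.rpow_mul (abs_nonneg _), inv_mul_cancel₀ (hσs j).ne', Real.rpow_one]
    _ ≤ anisoGauge σs η ^ σs j := Real.rpow_le_rpow (by positivity) h (hσs j).le

lemma isCompact_anisoGauge_le_one (hσs : ∀ j, 0 < σs j) :
    IsCompact {η | anisoGauge σs η ≤ 1} := by
  refine (isCompact_closedBall (0 : Fin p → ℝ) 1).of_isClosed_subset
    (isClosed_le (continuous_anisoGauge fun j => (hσs j).le) continuous_const) fun η hη => ?_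
  rw [mem_closedBall_zero_iff, pi_norm_le_iff_of_nonneg zero_le_one]
  intro j
  calc ‖η j‖ = |η j| := Real.norm_eq_abs _
    _ ≤ anisoGauge σs η ^ σs j := abs_le_anisoGauge_rpow hσs η j
    _ ≤ 1 := Real.rpow_le_one (anisoGauge_nonneg η) hη (hσs j).le

lemma integrable_max_one_abs_rpow {γ : ℝ} (hγ : γ < -1) :
    Integrable (fun t : ℝ => max 1 |t| ^ γ) := by
  have h := (integrable_one_add_norm (E := ℝ) (μ := volume) (r := -γ)
    (by simp; linarith)).const_mul (2 ^ (-γ))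
  refine h.mono' ((continuous_const.max continuous_abs).rpow_const
    fun t => Or.inl (by positivity)).aestronglyMeasurable (ae_of_all _ fun t => ?_)
  rw [Real.norm_eq_abs, abs_of_nonneg (by positivity), neg_neg, Real.norm_eq_abs]
  calc max 1 |t| ^ γ ≤ ((1 + |t|) / 2) ^ γ :=
        Real.rpow_le_rpow_of_nonpos (by positivity)
          (by linarith [le_max_left 1 |t|, le_max_right 1 |t|]) (by linarith)
    _ = 2 ^ (-γ) * (1 + |t|) ^ γ := by
        rw [Real.div_rpow (by positivity) zero_le_two, Real.rpow_neg zero_le_two]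
        ring

lemma integrable_max_one_anisoGauge_rpow (hσs : ∀ j, 0 < σs j) {β : ℝ}
    (hβ : β < -∑ j, σs j) :
    Integrable (fun η : Fin p → ℝ => max 1 (anisoGauge σs η) ^ β) := by
  set S := ∑ j, σs j
  have hS : 0 ≤ S := Finset.sum_nonneg fun j _ => (hσs j).le
  set γ := β / S
  have hγ : γ ≤ 0 := div_nonpos_of_nonpos_of_nonneg (by linarith) hS
  have hγ_lt : ∀ j : Fin p, γ < -1 := fun j => by
    have hS_pos : 0 < S := (hσs j).trans_le
      (Finset.single_le_sum (fun i _ => (hσs i).le) (Finset.mem_univ j))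
    rw [div_lt_iff₀ hS_pos]
    linarith
  have hβγ : β ≤ γ * S := by
    rcases hS.eq_or_lt with h | h
    · rw [← h, mul_zero]; linarith
    · rw [div_mul_cancel₀ _ h.ne']
  have hprod : Integrable (fun η : Fin p → ℝ => ∏ j, max 1 |η j| ^ γ) :=
    Integrable.fintype_prod (f := fun _ t => max 1 |t| ^ γ) (μ := fun _ => volume)
      fun j => integrable_max_one_abs_rpow (hγ_lt j)
  have hcont : Continuous fun η => max 1 (anisoGauge σs η) ^ β :=
    (continuous_const.max (continuous_anisoGauge fun j => (hσs j).le)).rpow_const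
      fun _ => Or.inl (by positivity)
  refine hprod.mono' hcont.aestronglyMeasurable (ae_of_all _ fun η => ?_)
  set ρ := max 1 (anisoGauge σs η)
  have hρ : 1 ≤ ρ := le_max_left _ _
  have hcoord : ∀ j, max 1 |η j| ≤ ρ ^ σs j := fun j =>
    max_le (Real.one_le_rpow hρ (hσs j).le) ((abs_le_anisoGauge_rpow hσs η j).trans
      (Real.rpow_le_rpow (anisoGauge_nonneg η) (le_max_right _ _) (hσs j).le))
  rw [Real.norm_eq_abs, abs_of_nonneg (by positivity)]
  calc ρ ^ β ≤ ρ ^ (γ * S) := Real.rpow_le_rpow_of_exponent_le hρ hβγ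
    _ = ∏ j, (ρ ^ σs j) ^ γ := by
        rw [mul_comm, Finset.sum_mul, Real.rpow_sum_of_pos (by positivity)]
        exact Finset.prod_congr rfl fun j _ => Real.rpow_mul (by positivity) _ _
    _ ≤ ∏ j, max 1 |η j| ^ γ := Finset.prod_le_prod (fun _ _ => by positivity)
        fun j _ => Real.rpow_le_rpow_of_nonpos (by positivity) (hcoord j) hγ

end Gauge

section Dilation

abbrev PointPair (n : ℕ) := (ℝ × (Fin n → ℝ)) × (ℝ × (Fin n → ℝ))

variable {n p : ℕ} {σ : Fin n → ℝ} {σs : Fin p → ℝ}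

lemma Edil_mk (lam : ℝ) (w : PointPair n) (η : Fin p → ℝ) :
    Edil σ σs lam (w, η) = (Ddil σ lam w, anisoDil σs lam η) := rfl

lemma Ddil_Ddil_inv {lam : ℝ} (hlam : 0 < lam) (w : PointPair n) :
    Ddil σ lam (Ddil σ lam⁻¹ w) = w := by
  simp [Ddil, Real.inv_rpow hlam.le, hlam.ne', (Real.rpow_pos_of_pos hlam _).ne']

lemma anisoDil_anisoDil_inv {lam : ℝ} (hlam : 0 < lam) (η : Fin p → ℝ) :
    anisoDil σs lam (anisoDil σs lam⁻¹ η) = η := by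
  funext j
  simp [anisoDil, Real.inv_rpow hlam.le, (Real.rpow_pos_of_pos hlam _).ne']

lemma anisoDil_inv_ne_zero {lam : ℝ} (hlam : 0 < lam) {η : Fin p → ℝ} (hη : η ≠ 0) :
    anisoDil σs lam⁻¹ η ≠ 0 := fun h => hη <| by
  rw [← anisoDil_anisoDil_inv (σs := σs) hlam η, h]
  funext j
  simp [anisoDil]

lemma norm_Ddil_le (hσ : ∀ i, 0 ≤ σ i) {μ : ℝ} (hμ₀ : 0 ≤ μ) (hμ₁ : μ ≤ 1)
    (w : PointPair n) : ‖Ddil σ μ w‖ ≤ ‖w‖ := by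
  have hscale : ∀ {a : ℝ}, 0 ≤ a → a ≤ 1 → ∀ x : ℝ, ‖a * x‖ ≤ ‖x‖ := fun ha₀ ha₁ x => by
    rw [norm_mul, Real.norm_of_nonneg ha₀]
    exact mul_le_of_le_one_left (norm_nonneg x) ha₁
  have hfactor : ∀ v : ℝ × (Fin n → ℝ),
      ‖((μ ^ 2 * v.1, fun i => μ ^ σ i * v.2 i) : ℝ × (Fin n → ℝ))‖ ≤ ‖v‖ := fun v =>
    max_le_max (hscale (by positivity) (pow_le_one₀ hμ₀ hμ₁) _)
      ((pi_norm_le_iff_of_nonneg (norm_nonneg _)).2 fun i =>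
        (hscale (by positivity) (Real.rpow_le_one hμ₀ hμ₁ (hσ i)) _).trans
          (norm_le_pi_norm _ i))
  exact max_le_max (hfactor w.1) (hfactor w.2)

def ddilCLM (σ : Fin n → ℝ) (μ : ℝ) : PointPair n →L[ℝ] PointPair n :=
  let P : (ℝ × (Fin n → ℝ)) →L[ℝ] ℝ × (Fin n → ℝ) :=
    (μ ^ 2 • ContinuousLinearMap.id ℝ ℝ).prodMap
      (ContinuousLinearMap.pi fun i => μ ^ σ i • ContinuousLinearMap.proj i)
  P.prodMap P

lemma ddilCLM_apply (μ : ℝ) (w : PointPair n) : ddilCLM σ μ w = Ddil σ μ w := rfl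

lemma norm_ddilCLM_le_one (hσ : ∀ i, 0 ≤ σ i) {μ : ℝ} (hμ₀ : 0 ≤ μ) (hμ₁ : μ ≤ 1) :
    ‖ddilCLM σ μ‖ ≤ 1 :=
  ContinuousLinearMap.opNorm_le_bound _ zero_le_one fun w => by
    rw [one_mul, ddilCLM_apply]
    exact norm_Ddil_le hσ hμ₀ hμ₁ w

lemma isOpen_OmegaSet : IsOpen (OmegaSet n p) :=
  isOpen_ne_fun (by fun_prop) (by fun_prop)

lemma mem_OmegaSet_of_fst_ne_snd {w : PointPair n} (hw : w.1 ≠ w.2) (η : Fin p → ℝ) :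
    (w, η) ∈ OmegaSet n p := fun h => hw (congrArg Prod.fst h)

lemma mem_OmegaSet_of_ne_zero (w : PointPair n) {η : Fin p → ℝ} (hη : η ≠ 0) :
    (w, η) ∈ OmegaSet n p := fun h => hη (congrArg Prod.snd h).symm

def IsEdilHomogeneous (σ : Fin n → ℝ) (σs : Fin p → ℝ) (α : ℝ)
    (g : PointPair n × (Fin p → ℝ) → ℝ) : Prop :=
  ∀ lam : ℝ, 0 < lam → ∀ w ∈ OmegaSet n p, g (Edil σ σs lam w) = lam ^ α * g w

variable {α : ℝ} {g : PointPair n × (Fin p → ℝ) → ℝ}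

lemma IsEdilHomogeneous.apply_eq_rpow_mul (hg : IsEdilHomogeneous σ σs α g) {lam : ℝ}
    (hlam : 0 < lam) (w : PointPair n) {η : Fin p → ℝ} (hη : η ≠ 0) :
    g (w, η) = lam ^ α * g (Ddil σ lam⁻¹ w, anisoDil σs lam⁻¹ η) := by
  have h := hg lam hlam _
    (mem_OmegaSet_of_ne_zero (Ddil σ lam⁻¹ w) (anisoDil_inv_ne_zero (σs := σs) hlam hη))
  rwa [Edil_mk, Ddil_Ddil_inv hlam, anisoDil_anisoDil_inv hlam] at h

lemma IsEdilHomogeneous.norm_fderiv_le (hg : IsEdilHomogeneous σ σs α g)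
    (hdiff : DifferentiableOn ℝ g (OmegaSet n p)) (hσ : ∀ i, 0 ≤ σ i) {lam : ℝ} (hlam : 1 ≤ lam)
    (w : PointPair n) {η : Fin p → ℝ} (hη : η ≠ 0) :
    ‖fderiv ℝ (fun w' => g (w', η)) w‖ ≤
      lam ^ α * ‖fderiv ℝ (fun w' => g (w', anisoDil σs lam⁻¹ η)) (Ddil σ lam⁻¹ w)‖ := by
  have hlam₀ : 0 < lam := zero_lt_one.trans_le hlam
  have hscaled : (fun w' => g (w', η)) =
      fun w' => lam ^ α * g (ddilCLM σ lam⁻¹ w', anisoDil σs lam⁻¹ η) :=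
    funext fun w' => hg.apply_eq_rpow_mul hlam₀ w' hη
  have hmem : (ddilCLM σ lam⁻¹ w, anisoDil σs lam⁻¹ η) ∈ OmegaSet n p :=
    mem_OmegaSet_of_ne_zero _ (anisoDil_inv_ne_zero hlam₀ hη)
  have hdiff' : DifferentiableAt ℝ (fun v => g (v, anisoDil σs lam⁻¹ η)) (ddilCLM σ lam⁻¹ w) :=
    (hdiff.differentiableAt
      (isOpen_OmegaSet.mem_nhds hmem)).hasFDerivAt_comp_prodMk_left.differentiableAt
  rw [hscaled]
  exact norm_fderiv_const_mul_comp_le (f := fun v => g (v, anisoDil σs lam⁻¹ η))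
    (norm_ddilCLM_le_one hσ (inv_nonneg.2 hlam₀.le) (inv_le_one_of_one_le₀ hlam))
    (by positivity) hdiff'

lemma exists_le_mul_max_one_anisoGauge_rpow {N : PointPair n × (Fin p → ℝ) → ℝ}
    (hσ : ∀ i, 0 ≤ σ i) (hσs : ∀ j, 0 < σs j) (hN : ContinuousOn N (OmegaSet n p))
    (hscale : ∀ lam : ℝ, 1 < lam → ∀ w η, η ≠ 0 →
      N (w, η) ≤ lam ^ α * N (Ddil σ lam⁻¹ w, anisoDil σs lam⁻¹ η))
    {B : Set (PointPair n)} (hB : IsCompact B) (hBΩ : ∀ w ∈ B, w.1 ≠ w.2) :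
    ∃ C, ∀ w ∈ B, ∀ η, N (w, η) ≤ C * max 1 (anisoGauge σs η) ^ α := by
  have hσs₀ : ∀ j, σs j ≠ 0 := fun j => (hσs j).ne'
  have hball := isCompact_anisoGauge_le_one hσs
  have hsphere : IsCompact {η : Fin p → ℝ | anisoGauge σs η = 1} :=
    hball.of_isClosed_subset
      (isClosed_eq (continuous_anisoGauge fun j => (hσs j).le) continuous_const)
      fun _ => le_of_eq
  obtain ⟨R, hR⟩ := hB.isBounded.subset_closedBall 0
  obtain ⟨C₁, hC₁⟩ := (hB.prod hball).bddAbove_image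
    (hN.mono fun q hq => mem_OmegaSet_of_fst_ne_snd (hBΩ _ hq.1) _)
  obtain ⟨C₂, hC₂⟩ := ((isCompact_closedBall (0 : PointPair n) R).prod hsphere).bddAbove_image
    (hN.mono fun q hq => mem_OmegaSet_of_ne_zero _
      (ne_zero_of_anisoGauge_ne_zero hσs₀ (hq.2.symm ▸ one_ne_zero)))
  refine ⟨max C₁ C₂, fun w hw η => ?_⟩
  rcases le_or_gt (anisoGauge σs η) 1 with hη | hη
  · rw [max_eq_left hη, Real.one_rpow, mul_one]
    exact (hC₁ ⟨(w, η), ⟨hw, hη⟩, rfl⟩).trans (le_max_left _ _)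
  set lam := anisoGauge σs η
  have hlam₀ : 0 < lam := zero_lt_one.trans hη
  have hmem : (Ddil σ lam⁻¹ w, anisoDil σs lam⁻¹ η) ∈
      Metric.closedBall 0 R ×ˢ {η : Fin p → ℝ | anisoGauge σs η = 1} := by
    refine ⟨?_, ?_⟩
    · rw [mem_closedBall_zero_iff]
      exact (norm_Ddil_le hσ (inv_nonneg.2 hlam₀.le) (inv_le_one_of_one_le₀ hη.le) w).trans
        (mem_closedBall_zero_iff.1 (hR hw))
    · change anisoGauge σs (anisoDil σs lam⁻¹ η) = 1
      rw [anisoGauge_anisoDil hσs₀ (inv_nonneg.2 hlam₀.le), inv_mul_cancel₀ hlam₀.ne']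
  rw [max_eq_right hη.le, mul_comm]
  calc N (w, η) ≤ lam ^ α * N (Ddil σ lam⁻¹ w, anisoDil σs lam⁻¹ η) :=
        hscale lam hη w η (ne_zero_of_anisoGauge_ne_zero hσs₀ hlam₀.ne')
    _ ≤ lam ^ α * max C₁ C₂ :=
        mul_le_mul_of_nonneg_left ((hC₂ ⟨_, hmem, rfl⟩).trans (le_max_right _ _))
          (by positivity)

lemma IsEdilHomogeneous.exists_integrable_bound (hg : IsEdilHomogeneous σ σs α g)
    (hg1 : ContDiffOn ℝ 1 g (OmegaSet n p)) (hσ : ∀ i, 0 ≤ σ i) (hσs : ∀ j, 0 < σs j)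
    (hα : α < -∑ j, σs j) {B : Set (PointPair n)} (hB : IsCompact B)
    (hBΩ : ∀ w ∈ B, w.1 ≠ w.2) :
    ∃ bound : (Fin p → ℝ) → ℝ, Integrable bound ∧ ∀ w ∈ B, ∀ η,
      |g (w, η)| ≤ bound η ∧ ‖fderiv ℝ (fun w' => g (w', η)) w‖ ≤ bound η := by
  set N := fun q : PointPair n × (Fin p → ℝ) =>
    max |g q| ‖fderiv ℝ (fun w' => g (w', q.2)) q.1‖
  have hN : ContinuousOn N (OmegaSet n p) :=
    hg1.continuousOn.abs.sup (hg1.continuousOn_fderiv_prodMk_left isOpen_OmegaSet).norm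
  have hscale : ∀ lam : ℝ, 1 < lam → ∀ w η, η ≠ 0 →
      N (w, η) ≤ lam ^ α * N (Ddil σ lam⁻¹ w, anisoDil σs lam⁻¹ η) := by
    intro lam hlam w η hη
    have hlam₀ : 0 < lam := zero_lt_one.trans hlam
    refine max_le ?_ ?_
    · rw [hg.apply_eq_rpow_mul hlam₀ w hη, abs_mul, abs_of_pos (by positivity)]
      exact mul_le_mul_of_nonneg_left (le_max_left _ _) (by positivity)
    · exact (hg.norm_fderiv_le (hg1.differentiableOn one_ne_zero) hσ hlam.le w hη).trans
        (mul_le_mul_of_nonneg_left (le_max_right _ _) (by positivity))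
  obtain ⟨C, hC⟩ := exists_le_mul_max_one_anisoGauge_rpow hσ hσs hN hscale hB hBΩ
  exact ⟨fun η => C * max 1 (anisoGauge σs η) ^ α,
    (integrable_max_one_anisoGauge_rpow hσs hα).const_mul C,
    fun w hw η => ⟨(le_max_left _ _).trans (hC w hw η), (le_max_right _ _).trans (hC w hw η)⟩⟩

end Dilation

theorem vectorField_passes_under_integral_general
    (n p : ℕ)
    (σ : Fin n → ℝ) (σs : Fin p → ℝ)
    (hσ : ∀ i, 1 ≤ σ i) (hσs : ∀ j, 1 ≤ σs j)
    (g : ((ℝ × (Fin n → ℝ)) × (ℝ × (Fin n → ℝ))) × (Fin p → ℝ) → ℝ)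
    (α : ℝ) (hα : α < -(∑ j, σs j))
    (hg : ContDiffOn ℝ (⊤ : ℕ∞) g (OmegaSet n p))
    (hghom : ∀ lam : ℝ, 0 < lam → ∀ w ∈ OmegaSet n p,
      g (Edil σ σs lam w) = lam ^ α * g w)
    (c : (ℝ × (Fin n → ℝ)) × (ℝ × (Fin n → ℝ)) →
         (ℝ × (Fin n → ℝ)) × (ℝ × (Fin n → ℝ))) :
    ∀ z ζ : ℝ × (Fin n → ℝ), z ≠ ζ →
      Integrable (fun η : Fin p → ℝ =>
        fderiv ℝ (fun w => g (w, η)) (z, ζ) (c (z, ζ))) ∧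
      DifferentiableAt ℝ
        (fun w : (ℝ × (Fin n → ℝ)) × (ℝ × (Fin n → ℝ)) =>
          ∫ η : Fin p → ℝ, g (w, η)) (z, ζ) ∧
      fderiv ℝ
          (fun w : (ℝ × (Fin n → ℝ)) × (ℝ × (Fin n → ℝ)) =>
            ∫ η : Fin p → ℝ, g (w, η)) (z, ζ) (c (z, ζ))
        = ∫ η : Fin p → ℝ, fderiv ℝ (fun w => g (w, η)) (z, ζ) (c (z, ζ)) := by
  intro z ζ hzζ
  have hg1 : ContDiffOn ℝ 1 g (OmegaSet n p) := hg.of_le (by simp)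
  obtain ⟨ε, hε, hball⟩ :
      ∃ ε > 0, Metric.closedBall (z, ζ) ε ⊆ {w : PointPair n | w.1 ≠ w.2} :=
    Metric.nhds_basis_closedBall.mem_iff.1
      ((isOpen_ne_fun continuous_fst continuous_snd).mem_nhds hzζ)
  obtain ⟨bound, hbound_int, hbound⟩ := IsEdilHomogeneous.exists_integrable_bound hghom hg1
    (fun i => zero_le_one.trans (hσ i)) (fun j => zero_lt_one.trans_le (hσs j)) hα
    (isCompact_closedBall _ _) hball
  obtain ⟨hint, hderiv⟩ := hg1.integrable_fderiv_and_hasFDerivAt_integral isOpen_OmegaSet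
    (Metric.closedBall_mem_nhds _ hε) (fun w hw η => mem_OmegaSet_of_fst_ne_snd (hball hw) η)
    hbound_int hbound
  exact ⟨hint.apply_continuousLinearMap _, hderiv.differentiableAt,
    by rw [hderiv.fderiv, ContinuousLinearMap.integral_apply hint]⟩

/-- **Differentiation under the integral sign in the saturation variables.**
Let `Z` be a smooth first-order operator `Zf(z,ζ) = Σ_j c_j(z,ζ) ∂f/∂w_j` (encoded by the
smooth coefficient vector field `c`, so that `Zf(w) = fderiv f w (c w)`), `D_λ`-homogeneous
of degree `m > 0`, and let `g ∈ C^∞(Ω)` be `E_λ`-homogeneous of degree `α < −q*`.  Then for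
every `z ≠ ζ`: the function `η ↦ Zg(·, ·, η)(z, ζ)` is integrable on `ℝ^p`; the function
`G(z, ζ) = ∫ g(z, ζ, η) dη` is differentiable at `(z, ζ)` (so all its partial derivatives
exist there); and `Z` passes under the integral sign: `ZG(z,ζ) = ∫ Zg(·, ·, η)(z,ζ) dη`. -/
theorem vectorField_passes_under_integral
    (n p : ℕ) (hn : 1 ≤ n) (hp : 1 ≤ p)
    (σ : Fin n → ℝ) (σs : Fin p → ℝ)
    (hσ : ∀ i, 1 ≤ σ i) (hσs : ∀ j, 1 ≤ σs j)
    (g : ((ℝ × (Fin n → ℝ)) × (ℝ × (Fin n → ℝ))) × (Fin p → ℝ) → ℝ)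
    (α : ℝ) (hα : α < -(∑ j, σs j))
    (hg : ContDiffOn ℝ (⊤ : ℕ∞) g (OmegaSet n p))
    (hghom : ∀ lam : ℝ, 0 < lam → ∀ w ∈ OmegaSet n p,
      g (Edil σ σs lam w) = lam ^ α * g w)
    (c : (ℝ × (Fin n → ℝ)) × (ℝ × (Fin n → ℝ)) →
         (ℝ × (Fin n → ℝ)) × (ℝ × (Fin n → ℝ)))
    (hc : ContDiff ℝ (⊤ : ℕ∞) c)
    (m : ℝ) (hm : 0 < m)
    (hZhom : ∀ lam : ℝ, 0 < lam →
      ∀ f : (ℝ × (Fin n → ℝ)) × (ℝ × (Fin n → ℝ)) → ℝ, ContDiff ℝ (⊤ : ℕ∞) f →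
      ∀ w : (ℝ × (Fin n → ℝ)) × (ℝ × (Fin n → ℝ)),
        fderiv ℝ (fun w' => f (Ddil σ lam w')) w (c w)
          = lam ^ m * fderiv ℝ f (Ddil σ lam w) (c (Ddil σ lam w))) :
    ∀ z ζ : ℝ × (Fin n → ℝ), z ≠ ζ →
      Integrable (fun η : Fin p → ℝ =>
        fderiv ℝ (fun w => g (w, η)) (z, ζ) (c (z, ζ))) ∧
      DifferentiableAt ℝ
        (fun w : (ℝ × (Fin n → ℝ)) × (ℝ × (Fin n → ℝ)) =>
          ∫ η : Fin p → ℝ, g (w, η)) (z, ζ) ∧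
      fderiv ℝ
          (fun w : (ℝ × (Fin n → ℝ)) × (ℝ × (Fin n → ℝ)) =>
            ∫ η : Fin p → ℝ, g (w, η)) (z, ζ) (c (z, ζ))
        = ∫ η : Fin p → ℝ, fderiv ℝ (fun w => g (w, η)) (z, ζ) (c (z, ζ)) :=
  vectorField_passes_under_integral_general n p σ σs hσ hσs g α hα hg hghom c

end
end
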